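/- For every k ≥ 1, the element τ^k(x₀) belongs to F^{(λ)}. In particular, τ(x₀) = ∑_{j=0}^∞ λ^{−2j} σ^{2j}((id − λ⁻¹σ)(x₀)), the series converging in norm in ℓ∞(ℤ). -/

import Mathlib

open scoped ENNReal
open Filter Topology

noncomputable section

/-- `ℓ₁(ℤ)`, the complex Banach space of absolutely summable bilateral sequences. -/
abbrev ellOne : Type := lp (fun _ : ℤ => ℂ) 1

/-- `ℓ∞(ℤ)`, the complex Banach space of bounded bilateral sequences. -/
abbrev ellInf : Type := lp (fun _ : ℤ => ℂ) ∞

lemma memℓp_zshift (m : ℤ) (x : ellInf) : Memℓp (fun n : ℤ => x (n - m)) ∞ := by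
  have hx := memℓp_infty_iff.1 (lp.memℓp x)
  refine memℓp_infty (hx.mono ?_)
  rintro r ⟨n, rfl⟩
  exact ⟨n - m, rfl⟩

/-- translation by `m` on `ℓ∞(ℤ)`: `(zshift m x) n = x (n - m)`.  In particular `zshift 1` is
the bilateral shift `σ`, with `σ(x)(n) = x (n - 1)`, and `zshift m = σ^m`. -/
def zshift (m : ℤ) (x : ellInf) : ellInf := ⟨fun n => x (n - m), memℓp_zshift m x⟩

/-- `b(n)` = number of ones in the binary expansion of `n ≥ 0`. -/
def binOnes (n : ℤ) : ℕ := (Nat.digits 2 n.toNat).sum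

/-- the element `x₀`: `x₀(n) = λ^{-b(n)}` for `n ≥ 0` and `x₀(n) = 0` for `n < 0`. -/
def x0Fun (lam : ℂ) : ℤ → ℂ := fun n => if 0 ≤ n then lam⁻¹ ^ binOnes n else 0

lemma x0_mem (lam : ℂ) (h : 1 < ‖lam‖) : Memℓp (x0Fun lam) ∞ := by
  refine memℓp_infty ⟨1, ?_⟩
  rintro r ⟨n, rfl⟩
  simp only [x0Fun]
  split_ifs
  · rw [norm_pow]
    refine pow_le_one₀ (norm_nonneg _) ?_
    rw [norm_inv]
    exact inv_le_one_of_one_le₀ h.le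
  · simp

/-- `x₀` as an element of `ℓ∞(ℤ)`. -/
def x0L (lam : ℂ) (h : 1 < ‖lam‖) : ellInf := ⟨x0Fun lam, x0_mem lam h⟩

/-- `F^{(λ)}`: the closed linear span in `ℓ∞(ℤ)` of the bilateral shifts `σ^m(x₀)`, `m ∈ ℤ`. -/
def Flam (lam : ℂ) (h : 1 < ‖lam‖) : Submodule ℂ ellInf :=
  (Submodule.span ℂ (Set.range fun m : ℤ => zshift m (x0L lam h))).topologicalClosure

/-- the operator `τ` on sequences: `τ(x)(n) = x(n/2)` for even `n`, `0` for odd `n`. -/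
def tauFun (x : ℤ → ℂ) : ℤ → ℂ := fun n => if (2 : ℤ) ∣ n then x (n / 2) else 0

lemma memℓp_tau (x : ellInf) : Memℓp (tauFun (⇑x)) ∞ := by
  have hx := memℓp_infty_iff.1 (lp.memℓp x)
  refine memℓp_infty ((hx.insert 0).mono ?_)
  rintro r ⟨n, rfl⟩
  simp only [tauFun]
  split_ifs
  · exact Set.mem_insert_of_mem _ ⟨n / 2, rfl⟩
  · simp

/-- the operator `τ : ℓ∞(ℤ) → ℓ∞(ℤ)`. -/
def tauL (x : ellInf) : ellInf := ⟨tauFun (⇑x), memℓp_tau x⟩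

/-! The recursion `b(2m) = b(m)`, `b(2m+1) = b(m) + 1` says exactly that
`(id + λ⁻¹σ) τ(x₀) = x₀`. Multiplying by `id − λ⁻¹σ` gives `(id − λ⁻²σ²) τ(x₀) = (id − λ⁻¹σ) x₀`,
and since `‖λ⁻²σ²‖ < 1` the Neumann series of `λ⁻²σ²` expands `τ(x₀)` as stated. Every term of
that series is a combination of shifts of `x₀`, so `τ(x₀) ∈ F^{(λ)}`; as `τ σ^m = σ^{2m} τ`, the
operator `τ` then maps `F^{(λ)}` into itself, which handles the higher iterates. -/

theorem hasSum_pow_apply_of_sub_apply_eq {𝕜 E : Type*} [NontriviallyNormedField 𝕜]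
    [NormedAddCommGroup E] [NormedSpace 𝕜 E] [CompleteSpace E] {A : E →L[𝕜] E} (hA : ‖A‖ < 1)
    {y z : E} (h : z - A z = y) : HasSum (fun j => (A ^ j) y) z := by
  have hz : (∑' j, A ^ j) y = z := by
    simpa [← h] using congr($(geom_series_mul_neg A hA) z)
  rw [← hz]
  exact (summable_geometric_of_norm_lt_one hA).hasSum.mapL (ContinuousLinearMap.apply 𝕜 E y)

theorem Submodule.mapsTo_topologicalClosure_span {R M : Type*} [Semiring R] [AddCommMonoid M]
    [Module R M] [TopologicalSpace M] [ContinuousAdd M] [ContinuousConstSMul R M]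
    {s : Set M} {q : Submodule R M} {T : M →L[R] M} (hq : IsClosed (q : Set M))
    (h : Set.MapsTo T s q) : Set.MapsTo T (span R s).topologicalClosure q := fun _ hx =>
  (span R s).topologicalClosure_minimal (t := q.comap (T : M →ₗ[R] M)) (span_le.2 h)
    (hq.preimage T.continuous) hx

theorem HasSum.mem_of_isClosed {ι M : Type*} [AddCommMonoid M] [TopologicalSpace M]
    {S : AddSubmonoid M} (hS : IsClosed (S : Set M)) {f : ι → M} {a : M} (hf : HasSum f a)
    (hfS : ∀ i, f i ∈ S) : a ∈ S :=
  hS.mem_of_tendsto hf (.of_forall fun _ => S.sum_mem fun i _ => hfS i)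

lemma zshift_apply (m : ℤ) (x : ellInf) (n : ℤ) : zshift m x n = x (n - m) := rfl

lemma tauL_apply (x : ellInf) (n : ℤ) : tauL x n = tauFun x n := rfl

lemma x0L_apply (lam : ℂ) (h : 1 < ‖lam‖) (n : ℤ) : x0L lam h n = x0Fun lam n := rfl

lemma binOnes_two_mul (k : ℤ) : binOnes (2 * k) = binOnes k := by
  rcases le_or_gt k 0 with hk | hk
  · simp [binOnes, Int.toNat_eq_zero.2 hk, Int.toNat_eq_zero.2 (by omega : 2 * k ≤ 0)]
  · have : (2 * k).toNat = 2 * k.toNat := by omega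
    rw [binOnes, binOnes, this, Nat.digits_def' one_lt_two (by omega)]
    simp

lemma binOnes_two_mul_add_one {k : ℤ} (hk : 0 ≤ k) : binOnes (2 * k + 1) = binOnes k + 1 := by
  have h1 : (2 * k + 1).toNat = 2 * k.toNat + 1 := by omega
  have h2 : (2 * k.toNat + 1) / 2 = k.toNat := by omega
  rw [binOnes, binOnes, h1, Nat.digits_def' one_lt_two (by omega), h2]
  simp [add_comm]

lemma x0Fun_two_mul (lam : ℂ) (k : ℤ) : x0Fun lam (2 * k) = x0Fun lam k := by
  simp only [x0Fun, binOnes_two_mul]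
  split_ifs <;> first | rfl | omega

lemma x0Fun_two_mul_add_one (lam : ℂ) (k : ℤ) :
    x0Fun lam (2 * k + 1) = lam⁻¹ * x0Fun lam k := by
  unfold x0Fun
  split_ifs with h1 h2 h2
  · rw [binOnes_two_mul_add_one h2, pow_succ']
  all_goals first | omega | simp

lemma tauFun_two_mul (x : ℤ → ℂ) (k : ℤ) : tauFun x (2 * k) = x k := by
  simp [tauFun]

lemma tauFun_two_mul_add_one (x : ℤ → ℂ) (k : ℤ) : tauFun x (2 * k + 1) = 0 := by
  simp [tauFun, Int.dvd_iff_emod_eq_zero]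

lemma tauL_x0L_add_smul_zshift (lam : ℂ) (h : 1 < ‖lam‖) :
    tauL (x0L lam h) + lam⁻¹ • zshift 1 (tauL (x0L lam h)) = x0L lam h := by
  ext n
  simp only [lp.coeFn_add, lp.coeFn_smul, Pi.add_apply, Pi.smul_apply, smul_eq_mul,
    zshift_apply, tauL_apply, x0L_apply]
  obtain ⟨k, rfl | rfl⟩ := Int.even_or_odd' n
  · rw [show 2 * k - 1 = 2 * (k - 1) + 1 by ring, tauFun_two_mul, tauFun_two_mul_add_one,
      x0Fun_two_mul, x0L_apply, mul_zero, add_zero]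
  · rw [add_sub_cancel_right, tauFun_two_mul, tauFun_two_mul_add_one, x0Fun_two_mul_add_one,
      x0L_apply, zero_add]

lemma zshift_zero (x : ellInf) : zshift 0 x = x := by
  ext n
  rw [zshift_apply, sub_zero]

lemma zshift_zshift (a b : ℤ) (x : ellInf) : zshift a (zshift b x) = zshift (a + b) x := by
  ext n
  rw [zshift_apply, zshift_apply, zshift_apply, sub_sub]

lemma tauL_zshift (m : ℤ) (x : ellInf) : tauL (zshift m x) = zshift (2 * m) (tauL x) := by
  ext n
  obtain ⟨k, rfl | rfl⟩ := Int.even_or_odd' n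
  · rw [tauL_apply, zshift_apply, tauL_apply, show 2 * k - 2 * m = 2 * (k - m) by ring,
      tauFun_two_mul, tauFun_two_mul, zshift_apply]
  · rw [tauL_apply, zshift_apply, tauL_apply, show 2 * k + 1 - 2 * m = 2 * (k - m) + 1 by ring,
      tauFun_two_mul_add_one, tauFun_two_mul_add_one]

lemma norm_zshift_le (m : ℤ) (x : ellInf) : ‖zshift m x‖ ≤ ‖x‖ :=
  lp.norm_le_of_forall_le (norm_nonneg x) fun n =>
    lp.norm_apply_le_norm ENNReal.top_ne_zero x (n - m)

lemma norm_tauL_le (x : ellInf) : ‖tauL x‖ ≤ ‖x‖ := by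
  refine lp.norm_le_of_forall_le (norm_nonneg x) fun n => ?_
  rw [tauL_apply, tauFun]
  split_ifs
  · exact lp.norm_apply_le_norm ENNReal.top_ne_zero x _
  · simp

def zshiftCLM (m : ℤ) : ellInf →L[ℂ] ellInf :=
  LinearMap.mkContinuous
    { toFun := zshift m
      map_add' := fun _ _ => rfl
      map_smul' := fun _ _ => rfl }
    1 fun x => by rw [one_mul]; exact norm_zshift_le m x

lemma zshiftCLM_apply (m : ℤ) (x : ellInf) : zshiftCLM m x = zshift m x := rfl

def tauCLM : ellInf →L[ℂ] ellInf :=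
  LinearMap.mkContinuous
    { toFun := tauL
      map_add' := fun x y => by
        ext n
        simp only [tauL_apply, tauFun, lp.coeFn_add, Pi.add_apply]
        split_ifs <;> simp
      map_smul' := fun c x => by
        ext n
        simp only [tauL_apply, tauFun, lp.coeFn_smul, Pi.smul_apply, RingHom.id_apply]
        split_ifs <;> simp }
    1 fun x => by rw [one_mul]; exact norm_tauL_le x

lemma tauCLM_apply (x : ellInf) : tauCLM x = tauL x := rfl

lemma smul_zshiftCLM_pow_apply (c : ℂ) (k : ℕ) (x : ellInf) :
    ((c • zshiftCLM 1) ^ k) x = c ^ k • zshift k x := by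
  induction k generalizing x with
  | zero => simp [zshift_zero]
  | succ k ih =>
    rw [pow_succ, mul_apply_eq_comp, ih]
    ext n
    simp [zshift_apply, zshiftCLM_apply, pow_succ, sub_sub, mul_assoc]

theorem hasSum_tauL_x0L (lam : ℂ) (h : 1 < ‖lam‖) :
    HasSum (fun j : ℕ =>
        lam⁻¹ ^ (2 * j) • zshift (2 * (j : ℤ)) (x0L lam h - lam⁻¹ • zshift 1 (x0L lam h)))
      (tauL (x0L lam h)) := by
  set x := x0L lam h
  set B := lam⁻¹ • zshiftCLM 1 with hB_def
  have hB : ‖B‖ < 1 := by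
    refine (B.opNorm_le_bound (norm_nonneg lam⁻¹) fun y => ?_).trans_lt ?_
    · rw [smul_apply, norm_smul, zshiftCLM_apply]
      exact mul_le_mul_of_nonneg_left (norm_zshift_le 1 y) (norm_nonneg _)
    · rw [norm_inv]
      exact inv_lt_one_of_one_lt₀ h
  have hB2 : ‖B ^ 2‖ < 1 :=
    (norm_pow_le' B two_pos).trans_lt (pow_lt_one₀ (norm_nonneg _) hB two_ne_zero)
  have hx : tauL x + B (tauL x) = x := tauL_x0L_add_smul_zshift lam h
  have key : tauL x - (B ^ 2) (tauL x) = x - B x := calc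
    _ = (tauL x + B (tauL x)) - B (tauL x + B (tauL x)) := by
      rw [map_add, sq, mul_apply_eq_comp]
      abel
    _ = x - B x := by rw [hx]
  simpa only [← pow_mul, hB_def, smul_zshiftCLM_pow_apply, smul_apply, zshiftCLM_apply,
    Nat.cast_mul, Nat.cast_ofNat] using hasSum_pow_apply_of_sub_apply_eq hB2 key

def shiftClosure (x : ellInf) : Submodule ℂ ellInf :=
  (Submodule.span ℂ (Set.range fun m : ℤ => zshift m x)).topologicalClosure

lemma isClosed_shiftClosure (x : ellInf) : IsClosed (shiftClosure x : Set ellInf) :=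
  Submodule.isClosed_topologicalClosure _

lemma zshift_self_mem_shiftClosure (m : ℤ) (x : ellInf) : zshift m x ∈ shiftClosure x :=
  Submodule.le_topologicalClosure _ (Submodule.subset_span ⟨m, rfl⟩)

lemma self_mem_shiftClosure (x : ellInf) : x ∈ shiftClosure x := by
  simpa only [zshift_zero] using zshift_self_mem_shiftClosure 0 x

lemma mapsTo_zshift_shiftClosure (m : ℤ) (x : ellInf) :
    Set.MapsTo (zshift m) (shiftClosure x) (shiftClosure x) :=
  Submodule.mapsTo_topologicalClosure_span (T := zshiftCLM m) (isClosed_shiftClosure x) <| by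
    rintro _ ⟨k, rfl⟩
    rw [zshiftCLM_apply, zshift_zshift]
    exact zshift_self_mem_shiftClosure _ x

lemma mapsTo_tauL_shiftClosure {x : ellInf} (hx : tauL x ∈ shiftClosure x) :
    Set.MapsTo tauL (shiftClosure x) (shiftClosure x) :=
  Submodule.mapsTo_topologicalClosure_span (T := tauCLM) (isClosed_shiftClosure x) <| by
    rintro _ ⟨k, rfl⟩
    rw [tauCLM_apply, tauL_zshift]
    exact mapsTo_zshift_shiftClosure _ x hx

/-- Statement 4.  For every `k ≥ 1`, `τ^k(x₀) ∈ F^{(λ)}`; in particular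
`τ(x₀) = ∑_{j=0}^∞ λ^{−2j} σ^{2j}((id − λ⁻¹σ)(x₀))`, converging in norm in `ℓ∞(ℤ)`. -/
theorem statement_4 (lam : ℂ) (h : 1 < ‖lam‖) :
    (∀ k : ℕ, 1 ≤ k → tauL^[k] (x0L lam h) ∈ Flam lam h) ∧
    HasSum
      (fun j : ℕ =>
        lam⁻¹ ^ (2 * j) • zshift (2 * (j : ℤ)) (x0L lam h - lam⁻¹ • zshift 1 (x0L lam h)))
      (tauL (x0L lam h)) := by
  set x := x0L lam h
  have hsum := hasSum_tauL_x0L lam h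
  have hterm (j : ℕ) : lam⁻¹ ^ (2 * j) • zshift (2 * (j : ℤ)) (x - lam⁻¹ • zshift 1 x) ∈
      shiftClosure x :=
    Submodule.smul_mem _ _ <| mapsTo_zshift_shiftClosure _ x <|
      Submodule.sub_mem _ (self_mem_shiftClosure x)
        (Submodule.smul_mem _ _ (zshift_self_mem_shiftClosure 1 x))
  have htau : tauL x ∈ shiftClosure x :=
    hsum.mem_of_isClosed (S := (shiftClosure x).toAddSubmonoid) (isClosed_shiftClosure x) hterm
  refine ⟨fun k hk => ?_, hsum⟩
  obtain ⟨k, rfl⟩ := Nat.exists_eq_add_of_le' hk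
  rw [Function.iterate_succ_apply]
  exact (mapsTo_tauL_shiftClosure htau).iterate k htau
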